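/- arXiv:2208.05934 — 2 statements merged into one kernel-verified Lean document; each statement's English description precedes it below -/
import Mathlib

section
/- Let R be a commutative Q-algebra. Let b^u_{ij} ∈ R be skew-symmetric in i,j, and let c^{ut}_{i₁i₂i₃i₄} ∈ R be alternating (fully skew-symmetric) in the indices i₁,i₂,i₃,i₄ and skew-symmetric in u,t. Define P^{ut}_{i₁i₂i₃i₄} := c^{ut}_{i₁i₂i₃i₄} + (1/2) Σ_{j<k} (-1)^{j+k+1} b^u_{i_j i_k} b^t_{î_j î_k}, where for j<k the pair (î_j, î_k) denotes the complementary pair of indices among (i₁,i₂,i₃,i₄) in increasing position order. Then P^{ut}_{i₁i₂i₃i₄} is alternating in (i₁,i₂,i₃,i₄); in particular it vanishes whenever two of the indices i₁,i₂,i₃,i₄ coincide. -/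
private lemma eq_zero_of_eq_neg_self' {R : Type*} [Ring R] [Algebra ℚ R] {x : R}
    (h : x = -x) : x = 0 := by
  have h2 : (2 : ℚ) • x = 0 := by
    rw [two_smul]
    nth_rewrite 1 [h]
    exact neg_add_cancel x
  calc x = (1/2 : ℚ) • ((2 : ℚ) • x) := by rw [smul_smul]; norm_num
    _ = 0 := by rw [h2, smul_zero]

/-- over a commutative `ℚ`-algebra, the quantity
`P^{ut}_{i₁i₂i₃i₄} := c^{ut}_{i₁i₂i₃i₄} + (1/2) Σ_{j<k} (-1)^{j+k+1} b^u_{i_j i_k} b^t_{î_j î_k}`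
(built from defect variables `b` skew-symmetric in the two lower indices and `c`
alternating in the four lower indices and skew-symmetric in the upper indices)
is alternating in `(i₁,i₂,i₃,i₄)`; in particular it vanishes whenever two of the
indices coincide. -/
theorem P_alternating {R ι υ : Type*} [CommRing R] [Algebra ℚ R]
    (b : υ → ι → ι → R) (hb : ∀ u i j, b u i j = - b u j i)
    (c : υ → υ → ι → ι → ι → ι → R)
    (hc1 : ∀ u t i j k l, c u t i j k l = - c u t j i k l)
    (hc2 : ∀ u t i j k l, c u t i j k l = - c u t i k j l)
    (hc3 : ∀ u t i j k l, c u t i j k l = - c u t i j l k)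
    (hcu : ∀ u t i j k l, c u t i j k l = - c t u i j k l)
    (P : υ → υ → ι → ι → ι → ι → R)
    (hP : ∀ u t i₁ i₂ i₃ i₄, P u t i₁ i₂ i₃ i₄ = c u t i₁ i₂ i₃ i₄ +
      (1/2 : ℚ) • (b u i₁ i₂ * b t i₃ i₄ - b u i₁ i₃ * b t i₂ i₄ + b u i₁ i₄ * b t i₂ i₃
        + b u i₂ i₃ * b t i₁ i₄ - b u i₂ i₄ * b t i₁ i₃ + b u i₃ i₄ * b t i₁ i₂)) :
    (∀ u t i₁ i₂ i₃ i₄, P u t i₁ i₂ i₃ i₄ = - P u t i₂ i₁ i₃ i₄) ∧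
    (∀ u t i₁ i₂ i₃ i₄, P u t i₁ i₂ i₃ i₄ = - P u t i₁ i₃ i₂ i₄) ∧
    (∀ u t i₁ i₂ i₃ i₄, P u t i₁ i₂ i₃ i₄ = - P u t i₁ i₂ i₄ i₃) ∧
    (∀ u t i₁ i₂ i₃ i₄, (i₁ = i₂ ∨ i₁ = i₃ ∨ i₁ = i₄ ∨ i₂ = i₃ ∨ i₂ = i₄ ∨ i₃ = i₄) →
      P u t i₁ i₂ i₃ i₄ = 0) := by

  have s1 : ∀ u t i₁ i₂ i₃ i₄, P u t i₁ i₂ i₃ i₄ = - P u t i₂ i₁ i₃ i₄ := by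
    intro u t i₁ i₂ i₃ i₄
    rw [hP u t i₁ i₂ i₃ i₄, hP u t i₂ i₁ i₃ i₄, hc1 u t i₂ i₁ i₃ i₄,
      hb u i₂ i₁, hb t i₂ i₁]
    simp only [Algebra.smul_def]
    ring
  have s2 : ∀ u t i₁ i₂ i₃ i₄, P u t i₁ i₂ i₃ i₄ = - P u t i₁ i₃ i₂ i₄ := by
    intro u t i₁ i₂ i₃ i₄
    rw [hP u t i₁ i₂ i₃ i₄, hP u t i₁ i₃ i₂ i₄, hc2 u t i₁ i₃ i₂ i₄,
      hb u i₃ i₂, hb t i₃ i₂]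
    simp only [Algebra.smul_def]
    ring
  have s3 : ∀ u t i₁ i₂ i₃ i₄, P u t i₁ i₂ i₃ i₄ = - P u t i₁ i₂ i₄ i₃ := by
    intro u t i₁ i₂ i₃ i₄
    rw [hP u t i₁ i₂ i₃ i₄, hP u t i₁ i₂ i₄ i₃, hc3 u t i₁ i₂ i₄ i₃,
      hb u i₄ i₃, hb t i₄ i₃]
    simp only [Algebra.smul_def]
    ring
  refine ⟨s1, s2, s3, ?_⟩
  have z12 : ∀ u t i x y, P u t i i x y = 0 := fun u t i x y =>
    eq_zero_of_eq_neg_self' (s1 u t i i x y)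
  have z23 : ∀ u t x i y, P u t x i i y = 0 := fun u t x i y =>
    eq_zero_of_eq_neg_self' (s2 u t x i i y)
  have z34 : ∀ u t x y i, P u t x y i i = 0 := fun u t x y i =>
    eq_zero_of_eq_neg_self' (s3 u t x y i i)
  rintro u t i₁ i₂ i₃ i₄ (rfl | rfl | rfl | rfl | rfl | rfl)
  · exact z12 u t i₁ i₃ i₄
  · rw [s2 u t i₁ i₂ i₁ i₄, z12 u t i₁ i₂ i₄, neg_zero]
  · rw [s3 u t i₁ i₂ i₃ i₁, s2 u t i₁ i₂ i₁ i₃, z12 u t i₁ i₂ i₃, neg_zero, neg_zero]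
  · exact z23 u t i₁ i₂ i₄
  · rw [s3 u t i₁ i₂ i₃ i₂, z23 u t i₁ i₂ i₃, neg_zero]
  · exact z34 u t i₁ i₂ i₃
end

section
/- Let R be a commutative ring, and suppose 0 → F₃ →^{d₃} F₂ →^{d₂} F₁ →^{d₁} R is a free resolution with a DG-algebra structure. Fix dual bases as usual and let y_{ih} be the matrix entries of d₂ and x_i = d₁(e_i). Then for all j, k, h, t: Σ_{i=1}^{r₁} y_{ih} ⟨e_j·e_k·e_i, γ_t⟩ = x_k ⟨e_j·f_h, γ_t⟩ - x_j ⟨e_k·f_h, γ_t⟩. -/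
/-- relation (W11,1).  For a free resolution
`0 → F₃ → F₂ → F₁ → R` (in coordinates `F_i = Fin nᵢ → R`, `d₂`, `d₃` given by matrices,
`d₁` by a row) with a DG-algebra structure (products `e·e'`, `e·f`, and triple products
`e·e'·e''` with the usual relations), writing `x_i = d₁(e_i)` and `y_{ih}` for the
coefficient of `e_i` in `d₂(f_h)`, one has
`Σ_i y_{ih} ⟨e_j·e_k·e_i, γ_t⟩ = x_k ⟨e_j·f_h, γ_t⟩ - x_j ⟨e_k·f_h, γ_t⟩`. -/
theorem W11_1_relation {R : Type*} [CommRing R] {n₁ n₂ n₃ : ℕ}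
    (d1 : Matrix (Fin 1) (Fin n₁) R) (d2 : Matrix (Fin n₁) (Fin n₂) R)
    (d3 : Matrix (Fin n₂) (Fin n₃) R)
    -- acyclicity: the complex is a free resolution
    (hex1 : Function.Exact d2.mulVecLin d1.mulVecLin)
    (hex2 : Function.Exact d3.mulVecLin d2.mulVecLin)
    (hinj : Function.Injective d3.mulVecLin)
    -- the DG-algebra structure
    (m11 : Fin n₁ → Fin n₁ → Fin n₂ → R) (m12 : Fin n₁ → Fin n₂ → Fin n₃ → R)
    (m111 : Fin n₁ → Fin n₁ → Fin n₁ → Fin n₃ → R)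
    (hskew11 : ∀ i j h, m11 i j h = - m11 j i h)
    (halt111a : ∀ i j k u, m111 i j k u = - m111 j i k u)
    (halt111b : ∀ i j k u, m111 i j k u = - m111 i k j u)
    -- `d₂(e_i·e_j) = d₁(e_i)e_j - d₁(e_j)e_i`
    (hrel11 : ∀ i j k, ∑ h, d2 k h * m11 i j h =
      (if k = j then d1 0 i else 0) - (if k = i then d1 0 j else 0))
    -- `d₃(e_i·f_h) = d₁(e_i)f_h - e_i·d₂(f_h)`
    (hrel12 : ∀ i h k, ∑ u, d3 k u * m12 i h u =
      (if k = h then d1 0 i else 0) - ∑ j, d2 j h * m11 i j k)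
    -- `d₃(e_i·e_j·e_k) = d₁(e_i)e_j·e_k - d₁(e_j)e_i·e_k + d₁(e_k)e_i·e_j`
    (hrel111 : ∀ i j k b, ∑ u, d3 b u * m111 i j k u =
      d1 0 i * m11 j k b - d1 0 j * m11 i k b + d1 0 k * m11 i j b) :
    ∀ (j k : Fin n₁) (h : Fin n₂) (t : Fin n₃),
      ∑ i, d2 i h * m111 j k i t = d1 0 k * m12 j h t - d1 0 j * m12 k h t := by
  have hd1d2 : ∀ h' : Fin n₂, ∑ i, d1 0 i * d2 i h' = 0 := by
    intro h'
    have h0 := congrFun (hex1.apply_apply_eq_zero (Pi.single h' (1 : R))) 0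
    simpa [Matrix.mulVecLin_apply, Matrix.mulVec, dotProduct, Pi.single_apply,
      mul_ite, Finset.sum_ite_eq'] using h0
  intro j k h
  have key : (fun t => ∑ i, d2 i h * m111 j k i t)
      = (fun t => d1 0 k * m12 j h t - d1 0 j * m12 k h t) := by
    apply hinj
    funext b
    simp only [Matrix.mulVecLin_apply, Matrix.mulVec, dotProduct]
    have hL : ∑ t, d3 b t * (∑ i, d2 i h * m111 j k i t)
        = ∑ i, d2 i h * (d1 0 j * m11 k i b - d1 0 k * m11 j i b + d1 0 i * m11 j k b) := by
      rw [show (∑ t, d3 b t * ∑ i, d2 i h * m111 j k i t)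
          = ∑ i, d2 i h * ∑ t, d3 b t * m111 j k i t by
        simp only [Finset.mul_sum]
        rw [Finset.sum_comm]
        exact Finset.sum_congr rfl fun i _ => Finset.sum_congr rfl fun t _ => by ring]
      exact Finset.sum_congr rfl fun i _ => by rw [hrel111 j k i b]
    have hR : ∑ t, d3 b t * (d1 0 k * m12 j h t - d1 0 j * m12 k h t)
        = d1 0 k * ((if b = h then d1 0 j else 0) - ∑ i, d2 i h * m11 j i b)
          - d1 0 j * ((if b = h then d1 0 k else 0) - ∑ i, d2 i h * m11 k i b) := by
      rw [show (∑ t, d3 b t * (d1 0 k * m12 j h t - d1 0 j * m12 k h t))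
          = d1 0 k * (∑ t, d3 b t * m12 j h t) - d1 0 j * (∑ t, d3 b t * m12 k h t) by
        simp only [Finset.mul_sum, ← Finset.sum_sub_distrib]
        exact Finset.sum_congr rfl fun t _ => by ring]
      rw [hrel12 j h b, hrel12 k h b]
    rw [hL, hR]
    have hz : ∑ i, d2 i h * (d1 0 i * m11 j k b) = 0 := by
      have h2 := hd1d2 h
      calc ∑ i, d2 i h * (d1 0 i * m11 j k b)
          = (∑ i, d1 0 i * d2 i h) * m11 j k b := by
            rw [Finset.sum_mul]; exact Finset.sum_congr rfl fun i _ => by ring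
        _ = 0 := by rw [h2, zero_mul]
    have hsplit : ∑ i, d2 i h * (d1 0 j * m11 k i b - d1 0 k * m11 j i b + d1 0 i * m11 j k b)
        = d1 0 j * (∑ i, d2 i h * m11 k i b) - d1 0 k * (∑ i, d2 i h * m11 j i b)
          + ∑ i, d2 i h * (d1 0 i * m11 j k b) := by
      simp only [Finset.mul_sum, ← Finset.sum_sub_distrib, ← Finset.sum_add_distrib]
      exact Finset.sum_congr rfl fun i _ => by ring
    rw [hsplit, hz]
    split_ifs <;> ring
  intro t
  exact congrFun key t
end
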